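/- arXiv:2504.19383 — 4 statements merged into one kernel-verified Lean document; each statement's English description precedes it below -/
import Mathlib

section
/- Let $p(s), q(s) \in \mathbb{C}[s]$ with $q$ monic, and define $c_{p,q}(s) = \gcd_{i \geq 0}\big( p(s+i) \cdot \prod_{j=0}^{i-1} q(s+j) \big)$ (a well-defined monic gcd of the infinite family, which stabilizes). Then $\gcd\big(p(s),\; q(s) \cdot c_{p,q}(s+1)\big) = c_{p,q}(s)$. -/
open Polynomial

/-- The family `p(s+i) * ∏_{j=0}^{i-1} q(s+j)`. -/
noncomputable def gcdFamily (p q : Polynomial ℂ) (i : ℕ) : Polynomial ℂ :=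
  p.comp (X + C (i : ℂ)) * ∏ j ∈ Finset.range i, q.comp (X + C (j : ℂ))

lemma gcdFamily_zero (p q : Polynomial ℂ) : gcdFamily p q 0 = p := by
  simp [gcdFamily]

lemma gcdFamily_succ (p q : Polynomial ℂ) (i : ℕ) :
    gcdFamily p q (i + 1) = q * (gcdFamily p q i).comp (X + C 1) := by
  have hcomp : ∀ (r : Polynomial ℂ) (a : ℂ),
      (r.comp (X + C a)).comp (X + C 1) = r.comp (X + C (a + 1)) := by
    intro r a
    rw [comp_assoc, add_comp, X_comp, C_comp, add_assoc, ← C_add, add_comm (1:ℂ) a]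
  unfold gcdFamily
  rw [mul_comp, prod_comp, Finset.prod_range_succ']
  simp only [hcomp]
  push_cast
  rw [C_0, add_zero, comp_X]
  ring
  
/-- if `c` is the monic gcd of the family
`p(s+i) ∏_{j<i} q(s+j)`, then the monic gcd of `p(s)` and `q(s)·c(s+1)` is `c(s)`. -/
theorem stmt0 (p q c : Polynomial ℂ) (hq : q.Monic) (hc : c.Monic)
    (hdvd : ∀ i : ℕ, c ∣ gcdFamily p q i)
    (hgcd : ∀ e : Polynomial ℂ, (∀ i : ℕ, e ∣ gcdFamily p q i) → e ∣ c) :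
    c ∣ p ∧ c ∣ q * c.comp (X + C 1) ∧
      ∀ e : Polynomial ℂ, e ∣ p → e ∣ q * c.comp (X + C 1) → e ∣ c := by
  have h0 : c ∣ p := by rw [← gcdFamily_zero p q]; exact hdvd 0
  -- c belongs to the ideal spanned by the family
  set I : Ideal (Polynomial ℂ) := Ideal.span (Set.range (gcdFamily p q)) with hI
  obtain ⟨g, hg⟩ : I.IsPrincipal := inferInstance
  have hgdvd : ∀ i, g ∣ gcdFamily p q i := by
    intro i
    have h1 : gcdFamily p q i ∈ I := Ideal.subset_span ⟨i, rfl⟩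
    rw [hg] at h1
    exact Ideal.mem_span_singleton.1 h1
  have hcI : c ∈ I := by
    rw [hg]
    exact Ideal.mem_span_singleton.2 (hgcd g hgdvd)
  have hkey : c ∣ q * c.comp (X + C 1) := by
    rw [hI] at hcI
    refine Submodule.span_induction (R := Polynomial ℂ) (M := Polynomial ℂ)
      (p := fun x _ => c ∣ q * x.comp (X + C 1)) ?_ ?_ ?_ ?_ hcI
    · rintro x ⟨i, rfl⟩
      rw [← gcdFamily_succ]
      exact hdvd (i + 1)
    · simp
    · intro x y _ _ hx hy
      rw [add_comp, mul_add]
      exact dvd_add hx hy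
    · intro r x _ hx
      rw [smul_eq_mul, mul_comp, mul_left_comm]
      exact hx.mul_left _
  refine ⟨h0, hkey, fun e hep heq => ?_⟩
  refine hgcd e (fun i => ?_)
  cases i with
  | zero => rw [gcdFamily_zero]; exact hep
  | succ i =>
    rw [gcdFamily_succ]
    obtain ⟨d, hd⟩ := hdvd i
    refine heq.trans ?_
    rw [hd, mul_comp]
    exact ⟨d.comp (X + C 1), by ring⟩
end

section
/- Let $p(s), q(s) \in \mathbb{C}[s]$ with $q(s) = \prod_{i=1}^d (s+r_i)$ for some $r_i \in \mathbb{C}$. For $k \geq 1$ write $[s+r]_k = \prod_{i=0}^{k-1}(s+r+i)$ and $[s+r]_k = 1$ for $k \leq 0$. Choose the componentwise maximal tuple $(k_1,\dots,k_d) \in \mathbb{Z}_{\geq 0}^d$ such that $\prod_{i=1}^d [s+r_i]_{k_i}$ divides $p(s)$. Then, with $c_{p,q}(s) = \gcd_{i\geq 0}\big(p(s+i)\prod_{j=0}^{i-1} q(s+j)\big)$, one has $q(s) \cdot \dfrac{c_{p,q}(s+1)}{c_{p,q}(s)} = \prod_{i=1}^d (s+r_i+k_i)$. -/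
open Polynomial

/-- The rising factorial polynomial `[s+r]_k = ∏_{j=0}^{k-1} (s+r+j)`, equal to `1` for `k ≤ 0`. -/
noncomputable def fallingProd (r : ℂ) (k : ℤ) : Polynomial ℂ :=
  ∏ j ∈ Finset.range k.toNat, (X + C (r + (j : ℂ)))

open Finset

private lemma rm_comp (p : Polynomial ℂ) (a b : ℂ) :
    rootMultiplicity a (p.comp (X + C b)) = rootMultiplicity (a + b) p := by
  by_cases hp : p = 0
  · simp [hp]
  have hcomp : p.comp (X + C b) ≠ 0 := comp_X_add_C_ne_zero_iff.mpr hp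
  have key : ∀ n : ℕ, (X - C a) ^ n ∣ p.comp (X + C b) ↔ (X - C (a + b)) ^ n ∣ p := by
    intro n
    rw [dvd_comp_X_add_C_iff]
    have : ((X - C a) ^ n).comp (X - C b) = (X - C (a + b)) ^ n := by
      rw [pow_comp]
      congr 1
      simp only [sub_comp, X_comp, C_comp]
      rw [map_add]
      ring
    rw [this]
  apply le_antisymm
  · exact (le_rootMultiplicity_iff hp).mpr ((key _).mp (pow_rootMultiplicity_dvd _ a))
  · exact (le_rootMultiplicity_iff hcomp).mpr ((key _).mpr (pow_rootMultiplicity_dvd _ (a + b)))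

private lemma rm_linear (a s : ℂ) :
    rootMultiplicity a (X + C s) = if a + s = 0 then 1 else 0 := by
  classical
  have : (X + C s : Polynomial ℂ) = X - C (-s) := by rw [map_neg, sub_neg_eq_add]
  rw [this, rootMultiplicity_X_sub_C]
  congr 1
  simp [eq_neg_iff_add_eq_zero]

private lemma rm_prod {ι : Type*} (a : ℂ) (f : ι → Polynomial ℂ) (s : Finset ι)
    (h : ∀ i ∈ s, f i ≠ 0) :
    rootMultiplicity a (∏ i ∈ s, f i) = ∑ i ∈ s, rootMultiplicity a (f i) := by
  classical
  induction s using Finset.induction_on with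
  | empty => simp
  | @insert x t hx ih =>
    have hx0 : f x ≠ 0 := h x (mem_insert_self _ _)
    have ht : ∀ i ∈ t, f i ≠ 0 := fun i hi => h i (mem_insert_of_mem hi)
    have hprod : (∏ i ∈ t, f i) ≠ 0 := prod_ne_zero_iff.mpr ht
    rw [prod_insert hx, sum_insert hx, rootMultiplicity_mul (mul_ne_zero hx0 hprod), ih ht]

private lemma sum_ite_unique (n : ℕ) (P : ℕ → Prop) [DecidablePred P]
    (hu : ∀ j j', P j → P j' → j = j') :
    (∑ j ∈ Finset.range n, if P j then 1 else 0) = if ∃ j < n, P j then 1 else 0 := by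
  split_ifs with h
  · obtain ⟨j0, hj0n, hj0⟩ := h
    rw [Finset.sum_eq_single j0]
    · simp [hj0]
    · intro b _ hb
      simp only [ite_eq_right_iff]
      intro hPb; exact absurd (hu b j0 hPb hj0) hb
    · intro hj0n'; exact absurd (mem_range.mpr hj0n) hj0n'
  · apply Finset.sum_eq_zero
    intro j hj
    simp only [ite_eq_right_iff]
    intro hPj
    exact absurd ⟨j, mem_range.mp hj, hPj⟩ h

private lemma fp_comp (r0 : ℂ) (k0 : ℕ) (b : ℂ) :
    (fallingProd r0 (k0 : ℤ)).comp (X + C b) = ∏ j ∈ Finset.range k0, (X + C (r0 + (j : ℂ) + b)) := by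
  rw [fallingProd]
  simp only [Int.toNat_natCast]
  rw [Polynomial.prod_comp]
  refine Finset.prod_congr rfl fun j _ => ?_
  simp only [add_comp, X_comp, C_comp]
  rw [add_assoc, ← C_add]
  ring_nf

private lemma fp_dvd_shift (r0 : ℂ) (k0 i : ℕ) :
    fallingProd r0 (k0 : ℤ) ∣
      (fallingProd r0 (k0 : ℤ)).comp (X + C (i : ℂ)) * ∏ j ∈ Finset.range i, (X + C (r0 + (j : ℂ))) := by
  rw [fp_comp]
  have h2 : (∏ j ∈ range k0, (X + C (r0 + (j : ℂ) + (i : ℂ)))) * ∏ j ∈ range i, (X + C (r0 + (j : ℂ)))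
      = ∏ j ∈ range (i + k0), (X + C (r0 + (j : ℂ))) := by
    rw [Finset.prod_range_add, mul_comm]
    congr 1
    refine Finset.prod_congr rfl fun j _ => ?_
    push_cast
    ring_nf
  rw [h2, fallingProd]
  simp only [Int.toNat_natCast]
  exact Finset.prod_dvd_prod_of_subset _ _ _ (Finset.range_subset_range.mpr (Nat.le_add_left _ _))

private lemma step_id (r0 : ℂ) (k0 : ℕ) :
    (X + C r0) * (fallingProd r0 (k0 : ℤ)).comp (X + C 1)
      = (X + C (r0 + (k0 : ℂ))) * fallingProd r0 (k0 : ℤ) := by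
  rw [fp_comp, fallingProd]
  simp only [Int.toNat_natCast]
  have hL : (X + C r0) * ∏ j ∈ range k0, (X + C (r0 + (j : ℂ) + 1))
      = ∏ j ∈ range (k0 + 1), (X + C (r0 + (j : ℂ))) := by
    rw [Finset.prod_range_succ', mul_comm]
    congr 1
    · refine Finset.prod_congr rfl fun j _ => ?_
      push_cast; ring_nf
    · norm_num
  have hR : (X + C (r0 + (k0 : ℂ))) * ∏ j ∈ range k0, (X + C (r0 + (j : ℂ)))
      = ∏ j ∈ range (k0 + 1), (X + C (r0 + (j : ℂ))) := by
    rw [Finset.prod_range_succ, mul_comm]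
  rw [hL, hR]

private lemma final_id (d : ℕ) (r : Fin d → ℂ) (k : Fin d → ℕ) :
    (∏ i, (X + C (r i))) * (∏ i, fallingProd (r i) (k i)).comp (X + C 1)
      = (∏ i, (X + C (r i + (k i : ℂ)))) * ∏ i, fallingProd (r i) (k i) := by
  rw [Polynomial.prod_comp, ← Finset.prod_mul_distrib, ← Finset.prod_mul_distrib]
  exact Finset.prod_congr rfl fun i _ => step_id (r i) (k i)

private lemma F_dvd_family (d : ℕ) (p : Polynomial ℂ) (r : Fin d → ℂ) (k : Fin d → ℕ)
    (hdvdk : (∏ l, fallingProd (r l) (k l)) ∣ p) (i : ℕ) :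
    (∏ l, fallingProd (r l) (k l)) ∣ gcdFamily p (∏ l, (X + C (r l))) i := by
  obtain ⟨g, hg⟩ := hdvdk
  rw [gcdFamily, hg, mul_comp]
  have hQ : (∏ j ∈ Finset.range i, (∏ l, (X + C (r l))).comp (X + C (j : ℂ)))
      = ∏ l, ∏ j ∈ Finset.range i, (X + C (r l + (j : ℂ))) := by
    rw [Finset.prod_comm]
    refine Finset.prod_congr rfl fun j _ => ?_
    rw [Polynomial.prod_comp]
    refine Finset.prod_congr rfl fun l _ => ?_
    simp only [add_comp, X_comp, C_comp]
    rw [add_assoc, ← C_add, add_comm (j : ℂ) (r l)]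
  have key : (∏ l, fallingProd (r l) (k l)) ∣
      (∏ l, fallingProd (r l) (k l)).comp (X + C (i : ℂ)) *
        ∏ j ∈ Finset.range i, (∏ l, (X + C (r l))).comp (X + C (j : ℂ)) := by
    rw [hQ, Polynomial.prod_comp, ← Finset.prod_mul_distrib]
    exact Finset.prod_dvd_prod_of_dvd _ _ fun l _ => fp_dvd_shift (r l) (k l) i
  have hre : (∏ l, fallingProd (r l) (k l)).comp (X + C (i : ℂ)) * g.comp (X + C (i : ℂ)) *
        ∏ j ∈ Finset.range i, (∏ l, (X + C (r l))).comp (X + C (j : ℂ))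
      = ((∏ l, fallingProd (r l) (k l)).comp (X + C (i : ℂ)) *
          ∏ j ∈ Finset.range i, (∏ l, (X + C (r l))).comp (X + C (j : ℂ))) *
        g.comp (X + C (i : ℂ)) := by ring
  rw [hre]
  exact key.mul_right _

private lemma fp_monic (r0 : ℂ) (k0 : ℤ) : (fallingProd r0 k0).Monic :=
  monic_prod_of_monic _ _ fun _ _ => monic_X_add_C _

private lemma hit_unique (β s : ℂ) {j j' : ℕ} (h : β + (j : ℂ) + s = 0) (h' : β + (j' : ℂ) + s = 0) :
    j = j' := by
  have : (j : ℂ) = (j' : ℂ) := by linear_combination h - h'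
  exact_mod_cast this

private lemma multF (d : ℕ) (r : Fin d → ℂ) (k : Fin d → ℕ) (β : ℂ) :
    rootMultiplicity β (∏ l, fallingProd (r l) (k l))
      = (Finset.univ.filter fun l => ∃ j < k l, β + (j : ℂ) + r l = 0).card := by
  classical
  rw [rm_prod β _ _ (fun l _ => (fp_monic (r l) (k l)).ne_zero), Finset.card_filter]
  refine Finset.sum_congr rfl fun l _ => ?_
  rw [fallingProd]
  simp only [Int.toNat_natCast]
  rw [rm_prod β _ _ (fun j _ => (monic_X_add_C _).ne_zero)]
  have hterm : ∀ j : ℕ, rootMultiplicity β (X + C (r l + (j : ℂ)))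
      = if β + (j : ℂ) + r l = 0 then 1 else 0 := by
    intro j
    rw [rm_linear]
    have h' : β + (r l + (j : ℂ)) = β + (j : ℂ) + r l := by ring
    rw [h']
  simp only [hterm]
  exact sum_ite_unique _ _ (fun j j' => hit_unique β (r l))

private lemma rm_le_of_dvd {u v : Polynomial ℂ} (hv : v ≠ 0) (h : u ∣ v) (β : ℂ) :
    rootMultiplicity β u ≤ rootMultiplicity β v := by
  have h1 := roots.le_of_dvd hv h
  rw [Multiset.le_iff_count] at h1
  simpa [count_roots] using h1 β

private lemma dvd_of_rm_le {u v : Polynomial ℂ} (hu : u ≠ 0) (hv : v ≠ 0)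
    (h : ∀ β, rootMultiplicity β u ≤ rootMultiplicity β v) : u ∣ v := by
  refine (Splits.dvd_iff_roots_le_roots (IsAlgClosed.splits u) hu hv).mpr ?_
  rw [Multiset.le_iff_count]
  intro β
  simpa [count_roots] using h β

private lemma fam_ne_zero (d : ℕ) (p : Polynomial ℂ) (r : Fin d → ℂ) (hp0 : p ≠ 0) (i : ℕ) :
    gcdFamily p (∏ l, (X + C (r l))) i ≠ 0 := by
  have hq0 : (∏ l, (X + C (r l)) : Polynomial ℂ) ≠ 0 :=
    (monic_prod_of_monic _ _ fun _ _ => monic_X_add_C _).ne_zero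
  exact mul_ne_zero (comp_X_add_C_ne_zero_iff.mpr hp0)
    (Finset.prod_ne_zero_iff.mpr fun j _ => comp_X_add_C_ne_zero_iff.mpr hq0)

private lemma multFam (d : ℕ) (p : Polynomial ℂ) (r : Fin d → ℂ) (hp0 : p ≠ 0) (α : ℂ) (i : ℕ) :
    rootMultiplicity α (gcdFamily p (∏ l, (X + C (r l))) i)
      = rootMultiplicity (α + i) p
        + (Finset.univ.filter fun l => ∃ j < i, α + (j : ℂ) + r l = 0).card := by
  classical
  have hq0 : (∏ l, (X + C (r l)) : Polynomial ℂ) ≠ 0 :=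
    (monic_prod_of_monic _ _ fun _ _ => monic_X_add_C _).ne_zero
  have hqc : ∀ j : ℕ, (∏ l, (X + C (r l)) : Polynomial ℂ).comp (X + C (j : ℂ)) ≠ 0 :=
    fun j => comp_X_add_C_ne_zero_iff.mpr hq0
  rw [gcdFamily, rootMultiplicity_mul (mul_ne_zero (comp_X_add_C_ne_zero_iff.mpr hp0)
      (Finset.prod_ne_zero_iff.mpr fun j _ => hqc j)), rm_comp,
    rm_prod α _ _ (fun j _ => hqc j)]
  congr 1
  have hterm : ∀ j ∈ Finset.range i, rootMultiplicity α ((∏ l, (X + C (r l))).comp (X + C (j : ℂ)))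
      = ∑ l, if α + (j : ℂ) + r l = 0 then 1 else 0 := by
    intro j _
    rw [rm_comp, rm_prod _ _ _ (fun l _ => (monic_X_add_C _).ne_zero)]
    exact Finset.sum_congr rfl fun l _ => rm_linear _ _
  rw [Finset.sum_congr rfl hterm, Finset.sum_comm, Finset.card_filter]
  exact Finset.sum_congr rfl fun l _ => sum_ite_unique _ _ (fun j j' => hit_unique α (r l))

private lemma c_dvd_F (d : ℕ) (p : Polynomial ℂ) (r : Fin d → ℂ) (k : Fin d → ℕ)
    (hp0 : p ≠ 0)
    (hFp : (∏ l, fallingProd (r l) (k l)) ∣ p)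
    (hmax : ∀ i : Fin d, ¬ ((X + C (r i + (k i : ℂ))) * ∏ j, fallingProd (r j) (k j)) ∣ p)
    (c : Polynomial ℂ) (hc0 : c ≠ 0)
    (hdvd : ∀ i : ℕ, c ∣ gcdFamily p (∏ l, (X + C (r l))) i) :
    c ∣ ∏ l, fallingProd (r l) (k l) := by
  classical
  have hF0 : (∏ l, fallingProd (r l) (k l)) ≠ 0 :=
    (monic_prod_of_monic _ _ fun l _ => fp_monic _ _).ne_zero
  refine dvd_of_rm_le hc0 hF0 fun α => ?_
  have hcle : ∀ i : ℕ, rootMultiplicity α c ≤ rootMultiplicity (α + i) p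
      + (Finset.univ.filter fun l => ∃ j < i, α + (j : ℂ) + r l = 0).card := by
    intro i
    have h1 := rm_le_of_dvd (fam_ne_zero d p r hp0 i) (hdvd i) α
    rwa [multFam d p r hp0 α i] at h1
  have hFle : ∀ β, rootMultiplicity β (∏ l, fallingProd (r l) (k l)) ≤ rootMultiplicity β p :=
    fun β => rm_le_of_dvd hp0 hFp β
  have hmax' : ∀ l : Fin d, rootMultiplicity (-(r l + (k l : ℂ))) p
      ≤ rootMultiplicity (-(r l + (k l : ℂ))) (∏ l, fallingProd (r l) (k l)) := by
    intro l
    by_contra hlt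
    push_neg at hlt
    apply hmax l
    have hXF : (X + C (r l + (k l : ℂ)) : Polynomial ℂ) = X - C (-(r l + (k l : ℂ))) := by
      rw [map_neg, sub_neg_eq_add]
    rw [hXF]
    have hG0 : (X - C (-(r l + (k l : ℂ)))) * ∏ l, fallingProd (r l) (k l) ≠ 0 :=
      mul_ne_zero (X_sub_C_ne_zero _) hF0
    refine dvd_of_rm_le hG0 hp0 fun γ => ?_
    rw [rootMultiplicity_mul hG0, rootMultiplicity_X_sub_C]
    split_ifs with hγ
    · subst hγ
      omega
    · rw [zero_add]
      exact hFle γ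
  rw [multF]
  set S := Finset.univ.filter (fun l : Fin d => ∃ j < k l, α + (j : ℂ) + r l = 0) with hS
  by_cases hB : ∃ l : Fin d, ∃ j : ℕ, k l ≤ j ∧ α + (j : ℂ) + r l = 0
  · -- B nonempty case
    set B := Finset.univ.filter (fun l : Fin d => ∃ j : ℕ, k l ≤ j ∧ α + (j : ℂ) + r l = 0)
      with hBdef
    have hBne : B.Nonempty := by
      obtain ⟨l, hl⟩ := hB
      exact ⟨l, by simp only [hBdef, Finset.mem_filter, Finset.mem_univ, true_and]; exact hl⟩
    set tt : Fin d → ℕ := fun l =>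
      if h : ∃ j : ℕ, k l ≤ j ∧ α + (j : ℂ) + r l = 0 then h.choose - k l else 0 with htt
    have hBspec : ∀ l ∈ B, ∃ j : ℕ, k l ≤ j ∧ α + (j : ℂ) + r l = 0 ∧ tt l = j - k l := by
      intro l hl
      rw [hBdef, Finset.mem_filter] at hl
      have h := hl.2
      refine ⟨h.choose, h.choose_spec.1, h.choose_spec.2, ?_⟩
      simp only [htt, dif_pos h]
    set i := (B.image tt).min' (hBne.image tt) with hi
    have himem := Finset.min'_mem (B.image tt) (hBne.image tt)
    obtain ⟨ls, hlsB, hlsi⟩ := Finset.mem_image.mp himem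
    have hmin : ∀ l ∈ B, i ≤ tt l := fun l hl =>
      Finset.min'_le _ _ (Finset.mem_image_of_mem _ hl)
    obtain ⟨J, hJk, hJhit, hJtt⟩ := hBspec ls hlsB
    have hieq : i = J - k ls := by rw [hi, ← hlsi, hJtt]
    have hicast : (i : ℂ) = (J : ℂ) - (k ls : ℂ) := by
      rw [hieq, Nat.cast_sub hJk]
    have hβ : α + (i : ℂ) = -(r ls + (k ls : ℂ)) := by
      rw [hicast]; linear_combination hJhit
    have step1 : rootMultiplicity (α + (i : ℂ)) p
        ≤ rootMultiplicity (α + (i : ℂ)) (∏ l, fallingProd (r l) (k l)) := by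
      rw [hβ]; exact hmax' ls
    set S₁ := Finset.univ.filter
      (fun l : Fin d => ∃ j < k l, (α + (i : ℂ)) + (j : ℂ) + r l = 0) with hS₁
    set S₂ := Finset.univ.filter
      (fun l : Fin d => ∃ j < i, α + (j : ℂ) + r l = 0) with hS₂
    have step2 : rootMultiplicity (α + (i : ℂ)) (∏ l, fallingProd (r l) (k l)) = S₁.card :=
      multF d r k _
    have hdisj : Disjoint S₁ S₂ := by
      rw [Finset.disjoint_left]
      intro l h1 h2
      rw [hS₁, Finset.mem_filter] at h1
      rw [hS₂, Finset.mem_filter] at h2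
      obtain ⟨j, hjk, hj⟩ := h1.2
      obtain ⟨j', hj'i, hj'⟩ := h2.2
      have hj'' : α + ((i + j : ℕ) : ℂ) + r l = 0 := by push_cast; linear_combination hj
      have := hit_unique α (r l) hj'' hj'
      omega
    have hsub : S₁ ∪ S₂ ⊆ S := by
      intro l hl
      rw [hS, Finset.mem_filter]
      refine ⟨Finset.mem_univ _, ?_⟩
      rcases Finset.mem_union.mp hl with h1 | h2
      · rw [hS₁, Finset.mem_filter] at h1
        obtain ⟨j, hjk, hj⟩ := h1.2
        have hj'' : α + ((i + j : ℕ) : ℂ) + r l = 0 := by push_cast; linear_combination hj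
        by_cases hlt : i + j < k l
        · exact ⟨i + j, hlt, hj''⟩
        · exfalso
          push_neg at hlt
          have hlB : l ∈ B := by
            rw [hBdef, Finset.mem_filter]
            exact ⟨Finset.mem_univ _, i + j, hlt, hj''⟩
          obtain ⟨j₀, hj₀k, hj₀hit, hj₀tt⟩ := hBspec l hlB
          have : j₀ = i + j := hit_unique α (r l) hj₀hit hj''
          have := hmin l hlB
          omega
      · rw [hS₂, Finset.mem_filter] at h2
        obtain ⟨j', hj'i, hj'⟩ := h2.2
        by_cases hlt : j' < k l
        · exact ⟨j', hlt, hj'⟩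
        · exfalso
          push_neg at hlt
          have hlB : l ∈ B := by
            rw [hBdef, Finset.mem_filter]
            exact ⟨Finset.mem_univ _, j', hlt, hj'⟩
          obtain ⟨j₀, hj₀k, hj₀hit, hj₀tt⟩ := hBspec l hlB
          have : j₀ = j' := hit_unique α (r l) hj₀hit hj'
          have := hmin l hlB
          omega
    calc rootMultiplicity α c
        ≤ rootMultiplicity (α + (i : ℂ)) p + S₂.card := hcle i
      _ ≤ S₁.card + S₂.card := by
          have := step1.trans_eq step2
          omega
      _ = (S₁ ∪ S₂).card := (Finset.card_union_of_disjoint hdisj).symm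
      _ ≤ S.card := Finset.card_le_card hsub
  · -- B empty case
    push_neg at hB
    have hfin : {n : ℕ | p.IsRoot (α + (n : ℂ))}.Finite := by
      apply Set.Finite.preimage ?_ (finite_setOf_isRoot hp0)
      intro a _ b _ hab
      have : (a : ℂ) = (b : ℂ) := by
        simp only [Set.mem_setOf_eq] at hab
        exact add_left_cancel hab
      exact_mod_cast this
    set N := hfin.toFinset.sup id + 1 with hN
    have hNroot : ¬ p.IsRoot (α + (N : ℂ)) := by
      intro h
      have hmem : N ∈ hfin.toFinset := by rw [Set.Finite.mem_toFinset]; exact h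
      have := Finset.le_sup (f := id) hmem
      simp only [id] at this
      omega
    have h1 := hcle N
    rw [rootMultiplicity_eq_zero hNroot, zero_add] at h1
    refine h1.trans (Finset.card_le_card ?_)
    intro l hl
    rw [Finset.mem_filter] at hl
    rw [hS, Finset.mem_filter]
    obtain ⟨j, hjN, hj⟩ := hl.2
    have hjk : j < k l := by
      by_contra h'
      push_neg at h'
      exact hB l j h' hj
    exact ⟨Finset.mem_univ _, j, hjk, hj⟩

/-- for `q(s) = ∏ (s + rᵢ)` and a componentwise maximal tuple `k` with
`∏ [s+rᵢ]_{kᵢ} ∣ p(s)`, one has `q(s) · c_{p,q}(s+1) / c_{p,q}(s) = ∏ (s + rᵢ + kᵢ)`. -/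
theorem stmt1 (d : ℕ) (p q : Polynomial ℂ) (r : Fin d → ℂ)
    (hq : q = ∏ i, (X + C (r i)))
    (k : Fin d → ℕ)
    (hdvdk : (∏ i, fallingProd (r i) (k i)) ∣ p)
    (hmax : ∀ i : Fin d, ¬ ((X + C (r i + (k i : ℂ))) * ∏ j, fallingProd (r j) (k j)) ∣ p)
    (c : Polynomial ℂ) (hc : c.Monic)
    (hdvd : ∀ i : ℕ, c ∣ gcdFamily p q i)
    (hgcd : ∀ e : Polynomial ℂ, (∀ i : ℕ, e ∣ gcdFamily p q i) → e ∣ c) :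
    q * c.comp (X + C 1) = (∏ i, (X + C (r i + (k i : ℂ)))) * c := by
  classical
  have hp0 : p ≠ 0 := by
    intro hp
    have hzero : ∀ i, gcdFamily p q i = 0 := by
      intro i; rw [gcdFamily, hp, zero_comp, zero_mul]
    have hX := hgcd (X ^ (c.natDegree + 1)) (fun i => by rw [hzero i]; exact dvd_zero _)
    have h2 := natDegree_le_of_dvd hX hc.ne_zero
    rw [natDegree_X_pow] at h2
    omega
  subst hq
  have hcF : c ∣ ∏ l, fallingProd (r l) (k l) :=
    c_dvd_F d p r k hp0 hdvdk hmax c hc.ne_zero hdvd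
  have hFc : (∏ l, fallingProd (r l) (k l)) ∣ c := hgcd _ (F_dvd_family d p r k hdvdk)
  have hceq : c = ∏ l, fallingProd (r l) (k l) :=
    eq_of_monic_of_associated hc (monic_prod_of_monic _ _ fun l _ => fp_monic _ _)
      (associated_of_dvd_dvd hcF hFc)
  rw [hceq]
  exact final_id d r k
end

section
/- Let $n \geq 1$, $k \in \mathbb{Z}_{\geq 0}$, and let $p_1 \geq p_2 \geq \cdots \geq p_n$ be integers. Then $\sum_{i=1}^n \max(k+i-n-p_i,\, 0) \leq k$ if and only if for every $1 \leq t \leq n$ one has $\sum_{i=t}^n p_i \geq (n-t)(k-1) - \binom{n-t}{2}$. -/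
open Finset

lemma sumIcoArith : ∀ (m : ℕ) (K : ℤ) (a : ℕ),
    ∑ j ∈ Finset.Ico a (a + m), (K + j + 1 - ((a : ℤ) + m)) = m * K - (m.choose 2 : ℤ) := by
  intro m
  induction m with
  | zero => simp
  | succ m ih =>
    intro K a
    have h : a ≤ a + m := Nat.le_add_right _ _
    rw [show a + (m + 1) = (a + m) + 1 by ring, Finset.sum_Ico_succ_top h]
    have hsum : ∑ j ∈ Finset.Ico a (a + m), (K + j + 1 - ((a : ℤ) + (m + 1 : ℕ)))
        = ∑ j ∈ Finset.Ico a (a + m), ((K - 1) + j + 1 - ((a : ℤ) + m)) := by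
      apply Finset.sum_congr rfl
      intro j _
      push_cast
      ring
    rw [hsum, ih (K - 1) a]
    have hch : ((m + 1).choose 2 : ℤ) = (m.choose 2 : ℤ) + m := by
      rw [Nat.choose_succ_succ m 1]
      push_cast [Nat.choose_one_right]
      ring
    rw [hch]
    push_cast
    ring

lemma sumFilterArith (n k : ℕ) (t : Fin n) :
    ∑ i ∈ Finset.univ.filter (fun i : Fin n => t ≤ i), ((k : ℤ) + ((i : ℕ) + 1) - n)
      = ((n - (t : ℕ) : ℕ) : ℤ) * k - (((n - (t : ℕ)).choose 2 : ℕ) : ℤ) := by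
  rw [Finset.sum_filter]
  have h1 : ∀ i : Fin n, (if t ≤ i then ((k : ℤ) + ((i : ℕ) + 1) - n) else 0)
      = (fun j : ℕ => if (t : ℕ) ≤ j then ((k : ℤ) + (j + 1) - n) else 0) (i : ℕ) := by
    intro i
    exact if_congr Fin.le_def rfl rfl
  rw [Finset.sum_congr rfl (fun i _ => h1 i),
    Fin.sum_univ_eq_sum_range (fun j : ℕ => if (t : ℕ) ≤ j then ((k : ℤ) + (j + 1) - n) else 0) n,
    ← Finset.sum_filter]
  have h2 : (Finset.range n).filter (fun j => (t : ℕ) ≤ j) = Finset.Ico (t : ℕ) n := by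
    ext j
    simp [Finset.mem_filter, Finset.mem_Ico, Finset.mem_range]
    omega
  rw [h2]
  have ht : (t : ℕ) + (n - (t : ℕ)) = n := by omega
  have := sumIcoArith (n - (t : ℕ)) (k : ℤ) (t : ℕ)
  rw [ht] at this
  rw [← this]
  apply Finset.sum_congr rfl
  intro j hj
  have : ((t : ℕ) : ℤ) + ((n - (t : ℕ) : ℕ) : ℤ) = (n : ℤ) := by
    push_cast [Nat.cast_sub (le_of_lt t.isLt)]
    ring
  rw [this]
  ring

/-- for integers `p₁ ≥ ⋯ ≥ pₙ` and `k ∈ ℤ_{≥0}`,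
`∑_{i=1}^n max(k+i-n-pᵢ, 0) ≤ k` iff for all `1 ≤ t ≤ n`,
`∑_{i=t}^n pᵢ ≥ (n-t)(k-1) - C(n-t,2)`. Here `i : Fin n` corresponds to the index `i+1`. -/
theorem stmt7 (n : ℕ) (hn : 1 ≤ n) (k : ℕ) (p : Fin n → ℤ) (hmono : Antitone p) :
    (∑ i : Fin n, max ((k : ℤ) + ((i : ℕ) + 1) - n - p i) 0 ≤ (k : ℤ)) ↔
      ∀ t : Fin n,
        ((n : ℤ) - ((t : ℕ) + 1)) * ((k : ℤ) - 1) - ((n - ((t : ℕ) + 1)).choose 2 : ℤ) ≤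
          ∑ i ∈ Finset.univ.filter (fun i => t ≤ i), p i := by
  set q : Fin n → ℤ := fun i => (k : ℤ) + ((i : ℕ) + 1) - n - p i with hq
  -- key per-t equivalence
  have key : ∀ t : Fin n,
      (∑ i ∈ Finset.univ.filter (fun i => t ≤ i), q i ≤ (k : ℤ)) ↔
      (((n : ℤ) - ((t : ℕ) + 1)) * ((k : ℤ) - 1) - ((n - ((t : ℕ) + 1)).choose 2 : ℤ) ≤
          ∑ i ∈ Finset.univ.filter (fun i => t ≤ i), p i) := by
    intro t
    have hsplit : ∑ i ∈ Finset.univ.filter (fun i => t ≤ i), q i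
        = (∑ i ∈ Finset.univ.filter (fun i : Fin n => t ≤ i), ((k : ℤ) + ((i : ℕ) + 1) - n))
          - ∑ i ∈ Finset.univ.filter (fun i => t ≤ i), p i := by
      rw [← Finset.sum_sub_distrib]
    rw [hsplit, sumFilterArith n k t]
    have htn : (t : ℕ) < n := t.isLt
    have e1 : n - (t : ℕ) = (n - ((t : ℕ) + 1)) + 1 := by omega
    have e2 : ((n - (t : ℕ) : ℕ) : ℤ) = ((n : ℤ) - ((t : ℕ) + 1)) + 1 := by
      push_cast [Nat.cast_sub (le_of_lt htn)]
      ring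
    have e3 : (((n - (t : ℕ)).choose 2 : ℕ) : ℤ)
        = ((n - ((t : ℕ) + 1)).choose 2 : ℤ) + ((n : ℤ) - ((t : ℕ) + 1)) := by
      rw [e1, Nat.choose_succ_succ _ 1]
      push_cast [Nat.choose_one_right]
      omega
    rw [e2, e3]
    constructor <;> intro h <;> linarith
  constructor
  · intro h t
    rw [← key t]
    calc ∑ i ∈ Finset.univ.filter (fun i => t ≤ i), q i
        ≤ ∑ i ∈ Finset.univ.filter (fun i => t ≤ i), max (q i) 0 :=
          Finset.sum_le_sum (fun i _ => le_max_left _ _)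
      _ ≤ ∑ i : Fin n, max (q i) 0 :=
          Finset.sum_le_sum_of_subset_of_nonneg (Finset.filter_subset _ _)
            (fun i _ _ => le_max_right _ _)
      _ ≤ (k : ℤ) := h
  · intro h
    have hmq : Monotone q := by
      intro i j hij
      have hp := hmono hij
      have : ((i : ℕ) : ℤ) ≤ ((j : ℕ) : ℤ) := by exact_mod_cast hij
      simp only [hq]
      linarith
    have hrw : ∑ i : Fin n, max (q i) 0
        = ∑ i ∈ Finset.univ.filter (fun i => 0 < q i), q i := by
      rw [Finset.sum_filter]
      apply Finset.sum_congr rfl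
      intro i _
      rcases le_or_gt (q i) 0 with hle | hlt
      · simp [max_eq_right hle, not_lt.mpr hle]
      · simp [max_eq_left hlt.le, hlt]
    rw [hrw]
    by_cases hE : (Finset.univ.filter (fun i => 0 < q i)).Nonempty
    · set t := (Finset.univ.filter (fun i => 0 < q i)).min' hE with htdef
      have htmem : t ∈ Finset.univ.filter (fun i => 0 < q i) := Finset.min'_mem _ hE
      have htq : 0 < q t := (Finset.mem_filter.mp htmem).2
      have hset : Finset.univ.filter (fun i : Fin n => 0 < q i)
          = Finset.univ.filter (fun i => t ≤ i) := by
        ext i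
        simp only [Finset.mem_filter, Finset.mem_univ, true_and]
        constructor
        · intro hi
          exact Finset.min'_le _ i (Finset.mem_filter.mpr ⟨Finset.mem_univ i, hi⟩)
        · intro hi
          exact lt_of_lt_of_le htq (hmq hi)
      rw [hset]
      exact (key t).mpr (h t)
    · rw [Finset.not_nonempty_iff_eq_empty.mp hE]
      simp
end

section
/- Let $n$ be even, $k \in \mathbb{Z}_{\geq 0}$, and let $p_2 \geq p_4 \geq \cdots \geq p_n$ be integers (indexed by even indices). Then $\sum_{i=1}^{n/2} \max(k + 2i - n - p_{2i},\, 0) \leq k$ if and only if for every $1 \leq t \leq n/2$ one has $\sum_{i=t}^{n/2} p_{2i} \geq (n/2 - t)(k-1) - (n/2 - t)^2$. -/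
open Finset

private lemma sum_range_aux (u : ℕ) (C : ℤ) :
    ∑ i ∈ Finset.range u, (C + 2 * (i : ℤ)) = u * C + u * (u - 1) := by
  induction u with
  | zero => simp
  | succ u ih =>
    rw [Finset.sum_range_succ, ih]
    push_cast
    ring

/-- Pfaffian case. With `n = 2m` even and integers `p₂ ≥ p₄ ≥ ⋯ ≥ pₙ`
(here `p i` denotes `p_{2(i+1)}` for `i : Fin m`),
`∑_{i=1}^{n/2} max(k + 2i - n - p_{2i}, 0) ≤ k` iff for all `1 ≤ t ≤ n/2`,
`∑_{i=t}^{n/2} p_{2i} ≥ (n/2 - t)(k-1) - (n/2 - t)²`. -/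
theorem stmt8 (n m : ℕ) (hm : 1 ≤ m) (hn : n = 2 * m) (k : ℕ) (p : Fin m → ℤ)
    (hmono : Antitone p) :
    (∑ i : Fin m, max ((k : ℤ) + 2 * ((i : ℕ) + 1) - n - p i) 0 ≤ (k : ℤ)) ↔
      ∀ t : Fin m,
        ((m : ℤ) - ((t : ℕ) + 1)) * ((k : ℤ) - 1) - ((m : ℤ) - ((t : ℕ) + 1)) ^ 2 ≤
          ∑ i ∈ Finset.univ.filter (fun i => t ≤ i), p i := by
  subst hn
  set a : Fin m → ℤ := fun i => (k : ℤ) + 2 * ((i : ℕ) + 1) - ((2 * m : ℕ) : ℤ) - p i with ha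
  have key : ∀ t : Fin m,
      ∑ i ∈ Finset.univ.filter (fun i => t ≤ i), a i
        = ((m : ℤ) - (t : ℕ)) * ((k : ℤ) + 1) - ((m : ℤ) - (t : ℕ)) ^ 2
          - ∑ i ∈ Finset.univ.filter (fun i => t ≤ i), p i := by
    intro t
    have hb : ∑ i ∈ Finset.univ.filter (fun i => t ≤ i),
        ((k : ℤ) + 2 * ((i : ℕ) + 1) - ((2 * m : ℕ) : ℤ))
        = ((m : ℤ) - (t : ℕ)) * ((k : ℤ) + 1) - ((m : ℤ) - (t : ℕ)) ^ 2 := by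
      rw [Finset.sum_filter]
      have h1 : ∑ i : Fin m,
          (if t ≤ i then ((k : ℤ) + 2 * ((i : ℕ) + 1) - ((2 * m : ℕ) : ℤ)) else 0)
          = ∑ i : Fin m,
          (if (t : ℕ) ≤ (i : ℕ) then ((k : ℤ) + 2 * ((i : ℕ) + 1) - ((2 * m : ℕ) : ℤ)) else 0) :=
        Finset.sum_congr rfl (fun i _ => if_congr Fin.le_def rfl rfl)
      rw [h1,
        Fin.sum_univ_eq_sum_range
          (fun j : ℕ => if (t : ℕ) ≤ j then ((k : ℤ) + 2 * ((j : ℕ) + 1) - ((2 * m : ℕ) : ℤ))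
            else 0) m,
        ← Finset.sum_filter]
      have h2 : (Finset.range m).filter (fun j => (t : ℕ) ≤ j) = Finset.Ico (t : ℕ) m := by
        ext j
        simp only [Finset.mem_filter, Finset.mem_range, Finset.mem_Ico]
        omega
      rw [h2, Finset.sum_Ico_eq_sum_range]
      have h3 : ∀ i ∈ Finset.range (m - (t : ℕ)),
          ((k : ℤ) + 2 * ((((t : ℕ) + i : ℕ) : ℤ) + 1) - ((2 * m : ℕ) : ℤ))
          = ((k : ℤ) + 2 * ((t : ℕ) + 1) - ((2 * m : ℕ) : ℤ)) + 2 * (i : ℤ) := by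
        intro i _
        push_cast
        ring
      rw [Finset.sum_congr rfl h3, sum_range_aux]
      have ht : (t : ℕ) ≤ m := le_of_lt t.isLt
      push_cast [Nat.cast_sub ht]
      ring
    have : ∑ i ∈ Finset.univ.filter (fun i => t ≤ i), a i
        = ∑ i ∈ Finset.univ.filter (fun i => t ≤ i),
            (((k : ℤ) + 2 * ((i : ℕ) + 1) - ((2 * m : ℕ) : ℤ)) - p i) := rfl
    rw [this, Finset.sum_sub_distrib, hb]
  have equiv_t : ∀ t : Fin m,
      (∑ i ∈ Finset.univ.filter (fun i => t ≤ i), a i ≤ (k : ℤ)) ↔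
      (((m : ℤ) - ((t : ℕ) + 1)) * ((k : ℤ) - 1) - ((m : ℤ) - ((t : ℕ) + 1)) ^ 2 ≤
          ∑ i ∈ Finset.univ.filter (fun i => t ≤ i), p i) := by
    intro t
    rw [key t]
    constructor <;> intro h <;> nlinarith [h]
  constructor
  · intro h t
    refine (equiv_t t).mp ?_
    calc ∑ i ∈ Finset.univ.filter (fun i => t ≤ i), a i
        ≤ ∑ i ∈ Finset.univ.filter (fun i => t ≤ i), max (a i) 0 :=
          Finset.sum_le_sum (fun i _ => le_max_left _ _)
      _ ≤ ∑ i : Fin m, max (a i) 0 :=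
          Finset.sum_le_sum_of_subset_of_nonneg (Finset.filter_subset _ _)
            (fun i _ _ => le_max_right _ _)
      _ ≤ (k : ℤ) := h
  · intro h
    have amono : Monotone a := by
      intro i j hij
      have hp := hmono hij
      have hij' : (i : ℕ) ≤ (j : ℕ) := hij
      simp only [ha]
      have : ((i : ℕ) : ℤ) ≤ ((j : ℕ) : ℤ) := by exact_mod_cast hij'
      linarith
    have hsum : ∑ i : Fin m, max (a i) 0
        = ∑ i ∈ Finset.univ.filter (fun i => 0 < a i), a i := by
      rw [Finset.sum_filter]
      apply Finset.sum_congr rfl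
      intro i _
      rcases le_or_gt (a i) 0 with hle | hlt
      · simp [max_eq_right hle, not_lt.mpr hle]
      · simp [max_eq_left hlt.le, hlt]
    rw [hsum]
    set T := Finset.univ.filter (fun i => 0 < a i) with hT
    rcases T.eq_empty_or_nonempty with he | hne
    · rw [he]
      simp
    · have hTeq : T = Finset.univ.filter (fun i => T.min' hne ≤ i) := by
        ext i
        simp only [hT, Finset.mem_filter, Finset.mem_univ, true_and]
        constructor
        · intro hi
          exact Finset.min'_le _ i (by simp [hT, hi])
        · intro hi
          have h0 : 0 < a (T.min' hne) :=
            (Finset.mem_filter.mp (T.min'_mem hne)).2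
          exact lt_of_lt_of_le h0 (amono hi)
      rw [hTeq]
      exact (equiv_t _).mpr (h _)
end
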